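/- arXiv:2305.03728 — 6 statements merged into one kernel-verified Lean document; each statement's English description precedes it below -/
import Mathlib

section
/- Exact error-propagation identity for Goldschmidt division with truncation errors: let A, B be real numbers with B ≠ 0 and Q = A/B. Let (Fᵢ)ᵢ≥₋₁ be any sequence of real numbers with F₋₁ = rec, and let (nᵢ)ᵢ≥₀, (dᵢ)ᵢ≥₀ be real sequences. Define N₋₁ = A, D₋₁ = B, and for i ≥ 0, Nᵢ = Nᵢ₋₁·Fᵢ₋₁ - nᵢ, Dᵢ = Dᵢ₋₁·Fᵢ₋₁ - dᵢ. Then for every k ≥ 0, Nₖ - Q·Dₖ = Σ_{i=0}^{k} (Q·dᵢ - nᵢ)·∏_{j=i}^{k-1} Fⱼ (where the empty product for i = k equals 1). -/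
/-!
The error `e k = N k - Q * D k` obeys the affine recurrence
`e (k + 1) = e k * F k + (Q * d (k + 1) - n (k + 1))`, and `e 0 = Q * d 0 - n 0` since
`Q * B = A`; unrolling the recurrence gives the sum.
-/

open Finset

theorem eq_sum_mul_prod_Ico_of_succ_eq_mul_add {R : Type*} [CommSemiring R] {e c F : ℕ → R}
    (h0 : e 0 = c 0) (hsucc : ∀ k, e (k + 1) = e k * F k + c (k + 1)) (k : ℕ) :
    e k = ∑ i ∈ range (k + 1), c i * ∏ j ∈ Ico i k, F j := by
  induction k with
  | zero => simp [h0]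
  | succ k ih =>
    rw [hsucc, ih, sum_range_succ _ (k + 1), Ico_self, prod_empty, mul_one, sum_mul]
    congr 1
    refine sum_congr rfl fun i hi => ?_
    rw [prod_Ico_succ_top (Nat.lt_succ_iff.mp (mem_range.mp hi)), mul_assoc]

theorem goldschmidt_error_propagation_general
    (A B rec : ℝ) (hB : B ≠ 0) (Q : ℝ) (hQ : Q = A / B)
    (F n d N D : ℕ → ℝ)
    (hN0 : N 0 = A * rec - n 0) (hD0 : D 0 = B * rec - d 0)
    (hN : ∀ i, N (i + 1) = N i * F i - n (i + 1))
    (hD : ∀ i, D (i + 1) = D i * F i - d (i + 1)) :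
    ∀ k : ℕ, N k - Q * D k =
      ∑ i ∈ Finset.range (k + 1),
        (Q * d i - n i) * ∏ j ∈ Finset.Ico i k, F j := by
  have hQB : Q * B = A := by rw [hQ, div_mul_cancel₀ A hB]
  refine eq_sum_mul_prod_Ico_of_succ_eq_mul_add ?_ fun i => ?_
  · rw [hN0, hD0]
    linear_combination (-rec) * hQB
  · rw [hN, hD]
    ring

/-- Exact error-propagation identity for Goldschmidt division with truncation
errors on the numerator and denominator. -/
theorem goldschmidt_error_propagation
    (A B rec : ℝ) (hB : B ≠ 0) (Q : ℝ) (hQ : Q = A / B)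
    (F n d N D : ℕ → ℝ)
    (hN0 : N 0 = A * rec - n 0) (hD0 : D 0 = B * rec - d 0)
    (hF0 : F 0 = rec)
    (hN : ∀ i, N (i + 1) = N i * F i - n (i + 1))
    (hD : ∀ i, D (i + 1) = D i * F i - d (i + 1)) :
    ∀ k : ℕ, N k - Q * D k =
      ∑ i ∈ Finset.range (k + 1),
        (Q * d i - n i) * ∏ j ∈ Finset.Ico i k, F j :=
  goldschmidt_error_propagation_general A B rec hB Q hQ F n d N D hN0 hD0 hN hD
end

section
/- Numerator-error-only identity after two iterations: let A, B, rec be reals with B ≠ 0, Q = A/B, ε₀ = 1 - B·rec. Suppose N₀ = A·rec - n₀, D₀ = B·rec, F₀ = 2 - D₀, N₁ = N₀·F₀ - n₁, D₁ = D₀·F₀, F₁ = 2 - D₁, N₂ = N₁·F₁ - n₂, where n₀, n₁, n₂ are reals. Then F₀ = 1 + ε₀, F₁ = 1 + ε₀², D₁ = 1 - ε₀², and N₂ = Q·(1 - ε₀⁴) - n₀·F₀·F₁ - n₁·F₁ - n₂. -/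
/-!
Writing `D₀ = B·rec = 1 - ε₀`, each Goldschmidt step squares the error of the denominator:
`D·(2 - D) = 1 - e²` when `D = 1 - e`. Without rounding the numerator tracks `Q·Dᵢ`, and a
truncation error committed at step `i` is afterwards only multiplied by the later factors `Fⱼ`.
-/

section Goldschmidt

variable {R : Type*} [CommRing R]

theorem goldschmidt_factor_eq {D e : R} (h : D = 1 - e) : 2 - D = 1 + e := by
  rw [h]; ring

theorem goldschmidt_denominator_step {D e : R} (h : D = 1 - e) : D * (2 - D) = 1 - e ^ 2 := by
  rw [goldschmidt_factor_eq h, h]; ring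

theorem goldschmidt_numerator_step {N Q D err F n : R} (h : N = Q * D - err) :
    N * F - n = Q * (D * F) - (err * F + n) := by
  rw [h]; ring

end Goldschmidt

/-- Numerator-error-only identity after two Goldschmidt iterations. -/
theorem numerator_error_two_iterations
    (A B rec Q ε₀ n₀ n₁ n₂ N₀ D₀ F₀ N₁ D₁ F₁ N₂ : ℝ)
    (hB : B ≠ 0) (hQ : Q = A / B) (hε : ε₀ = 1 - B * rec)
    (hN₀ : N₀ = A * rec - n₀) (hD₀ : D₀ = B * rec)
    (hF₀ : F₀ = 2 - D₀)
    (hN₁ : N₁ = N₀ * F₀ - n₁) (hD₁ : D₁ = D₀ * F₀)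
    (hF₁ : F₁ = 2 - D₁)
    (hN₂ : N₂ = N₁ * F₁ - n₂) :
    F₀ = 1 + ε₀ ∧ F₁ = 1 + ε₀ ^ 2 ∧ D₁ = 1 - ε₀ ^ 2 ∧
      N₂ = Q * (1 - ε₀ ^ 4) - n₀ * F₀ * F₁ - n₁ * F₁ - n₂ := by
  have hD₀ε : D₀ = 1 - ε₀ := by rw [hε, hD₀]; ring
  have hF₀ε : F₀ = 1 + ε₀ := hF₀ ▸ goldschmidt_factor_eq hD₀ε
  have hD₁ε : D₁ = 1 - ε₀ ^ 2 := hD₁ ▸ hF₀ ▸ goldschmidt_denominator_step hD₀ε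
  have hF₁ε : F₁ = 1 + ε₀ ^ 2 := hF₁ ▸ goldschmidt_factor_eq hD₁ε
  have hD₂ε : D₁ * F₁ = 1 - ε₀ ^ 4 := by
    rw [hF₁, goldschmidt_denominator_step hD₁ε]; ring
  have hN₀Q : N₀ = Q * D₀ - n₀ := by rw [hN₀, hQ, hD₀]; field_simp
  have hN₁Q : N₁ = Q * D₁ - (n₀ * F₀ + n₁) := hN₁ ▸ hD₁ ▸ goldschmidt_numerator_step hN₀Q
  refine ⟨hF₀ε, hF₁ε, hD₁ε, ?_⟩
  rw [hN₂, goldschmidt_numerator_step hN₁Q, hD₂ε]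
  ring
end

section
/- Lower bound under numerator errors only: let A, B, rec be reals with B ≠ 0, Q = A/B > 0, ε₀ = 1 - B·rec with |ε₀| ≤ 2⁻⁶. Suppose N₀ = A·rec - n₀, D₀ = B·rec, F₀ = 2 - D₀, N₁ = N₀·F₀ - n₁, D₁ = D₀·F₀, F₁ = 2 - D₁, N₂ = N₁·F₁ - n₂, where 0 ≤ nᵢ < n for i = 0, 1, 2. Then N₂ - Q > -Q·ε₀⁴ - 4·n. -/
/-!
With `B * rec = 1 - ε₀` the correction factors are `F₀ = 1 + ε₀` and `F₁ = 1 + ε₀²`, so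
`D₂ = D₁ F₁ = 1 - ε₀⁴` and, without truncation, `N₂ = Q D₂`. Each truncation `nᵢ` is subtracted
and then scaled by the later factors, so `N₂ - Q = -Q ε₀⁴ - (n₀ F₀ F₁ + n₁ F₁ + n₂)`. For small
`ε₀` both `F₀ F₁` and `F₁` are at most `3/2`, which keeps the accumulated error below `4 n`.
-/

theorem goldschmidt_numerator_two_steps (Q ε n₀ n₁ n₂ : ℝ) :
    ((Q * (1 - ε) - n₀) * (2 - (1 - ε)) - n₁) * (2 - (1 - ε) * (2 - (1 - ε))) - n₂ =
      Q * (1 - ε ^ 4) - (n₀ * ((1 + ε) * (1 + ε ^ 2)) + n₁ * (1 + ε ^ 2) + n₂) := by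
  ring

theorem goldschmidt_accumulated_error_lt {ε n n₀ n₁ n₂ : ℝ} (hε : |ε| ≤ 1 / 4)
    (hn₀ : 0 ≤ n₀) (hn₀' : n₀ < n) (hn₁ : 0 ≤ n₁) (hn₁' : n₁ < n) (hn₂' : n₂ < n) :
    n₀ * ((1 + ε) * (1 + ε ^ 2)) + n₁ * (1 + ε ^ 2) + n₂ < 4 * n := by
  obtain ⟨hε_lower, hε_upper⟩ := abs_le.mp hε
  have hF₁ : 1 + ε ^ 2 ≤ 3 / 2 := by nlinarith
  have hF₀F₁ : (1 + ε) * (1 + ε ^ 2) ≤ 3 / 2 := by nlinarith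
  calc n₀ * ((1 + ε) * (1 + ε ^ 2)) + n₁ * (1 + ε ^ 2) + n₂
      ≤ n₀ * (3 / 2) + n₁ * (3 / 2) + n₂ := by gcongr
    _ < 4 * n := by linarith

theorem numerator_error_lower_bound_general
    (A B rec Q ε₀ n n₀ n₁ n₂ N₀ D₀ F₀ N₁ D₁ F₁ N₂ : ℝ)
    (hB : B ≠ 0) (hQ : Q = A / B)
    (hε : ε₀ = 1 - B * rec) (hε_small : |ε₀| ≤ 2 ^ (-6 : ℤ))
    (hn₀ : 0 ≤ n₀) (hn₀' : n₀ < n)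
    (hn₁ : 0 ≤ n₁) (hn₁' : n₁ < n)
    (hn₂' : n₂ < n)
    (hN₀ : N₀ = A * rec - n₀) (hD₀ : D₀ = B * rec)
    (hF₀ : F₀ = 2 - D₀)
    (hN₁ : N₁ = N₀ * F₀ - n₁) (hD₁ : D₁ = D₀ * F₀)
    (hF₁ : F₁ = 2 - D₁)
    (hN₂ : N₂ = N₁ * F₁ - n₂) :
    N₂ - Q > -Q * ε₀ ^ 4 - 4 * n := by
  have hBr : B * rec = 1 - ε₀ := by linarith
  have hAr : A * rec = Q * (1 - ε₀) := by
    rw [hQ, ← hBr]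
    field_simp
  have hε' : |ε₀| ≤ 1 / 4 := hε_small.trans (by norm_num)
  rw [hN₂, hF₁, hD₁, hN₁, hF₀, hN₀, hD₀, hAr, hBr, goldschmidt_numerator_two_steps]
  linarith [goldschmidt_accumulated_error_lt hε' hn₀ hn₀' hn₁ hn₁' hn₂']

/-- Lower bound on the final error under numerator truncation errors only. -/
theorem numerator_error_lower_bound
    (A B rec Q ε₀ n n₀ n₁ n₂ N₀ D₀ F₀ N₁ D₁ F₁ N₂ : ℝ)
    (hB : B ≠ 0) (hQ : Q = A / B) (hQpos : 0 < Q)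
    (hε : ε₀ = 1 - B * rec) (hε_small : |ε₀| ≤ 2 ^ (-6 : ℤ))
    (hn₀ : 0 ≤ n₀) (hn₀' : n₀ < n)
    (hn₁ : 0 ≤ n₁) (hn₁' : n₁ < n)
    (hn₂ : 0 ≤ n₂) (hn₂' : n₂ < n)
    (hN₀ : N₀ = A * rec - n₀) (hD₀ : D₀ = B * rec)
    (hF₀ : F₀ = 2 - D₀)
    (hN₁ : N₁ = N₀ * F₀ - n₁) (hD₁ : D₁ = D₀ * F₀)
    (hF₁ : F₁ = 2 - D₁)
    (hN₂ : N₂ = N₁ * F₁ - n₂) :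
    N₂ - Q > -Q * ε₀ ^ 4 - 4 * n :=
  numerator_error_lower_bound_general A B rec Q ε₀ n n₀ n₁ n₂ N₀ D₀ F₀ N₁ D₁ F₁ N₂ hB hQ hε hε_small
    hn₀ hn₀' hn₁ hn₁' hn₂' hN₀ hD₀ hF₀ hN₁ hD₁ hF₁ hN₂
end

section
/- Upper bound under denominator errors only: let A, B, rec be reals with B ≠ 0 and 0 < Q = A/B < 2. Let ε₀ = 1 - B·rec and suppose N₀ = A·rec, D₀ = B·rec - d₀, F₀ = 2 - D₀, N₁ = N₀·F₀, D₁ = D₀·F₀ - d₁, F₁ = 2 - D₁, N₂ = N₁·F₁, where 0 ≤ dᵢ < d for i = 0, 1 with 0 < d ≤ 2⁻¹², and the modified error ε₀' = ε₀ + d₀ satisfies |ε₀'| ≤ 2⁻⁶. Then N₂ - Q < (2·Q + 1)·d. -/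
/-!
Writing `e = ε₀ + d₀`, the truncated denominators are `D₀ = 1 - e` and `D₁ = 1 - e² - d₁`, so
`N₂ = Q (1 - e + d₀)(1 + e)(1 + e² + d₁)`. In `N₂ - Q` the exact Goldschmidt error `-Q e⁴` is
nonpositive, and each truncation error enters with a factor at most `1 + 1/32`, so
`N₂ - Q < Q (2 + 1/32) d < (2Q + 1) d` because `Q < 2`.
-/

theorem two_step_error_eq (Q e d₀ d₁ : ℝ) :
    Q * (1 - e + d₀) * (1 + e) * (1 + e ^ 2 + d₁) - Q =
      Q * (d₁ * (1 - e ^ 2) + d₀ * ((1 + e) * (1 + e ^ 2 + d₁)) - e ^ 4) := by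
  ring

theorem two_step_error_factor_lt {e d d₀ d₁ : ℝ} (he : |e| ≤ 1 / 64) (hd : d ≤ 1 / 4096)
    (hd₀ : 0 ≤ d₀) (hd₀' : d₀ < d) (hd₁ : 0 ≤ d₁) (hd₁' : d₁ < d) :
    d₁ * (1 - e ^ 2) + d₀ * ((1 + e) * (1 + e ^ 2 + d₁)) - e ^ 4 < (2 + 1 / 32) * d := by
  obtain ⟨he_lo, he_hi⟩ := abs_le.mp he
  have he_sq : e ^ 2 ≤ 1 / 4096 := by nlinarith
  have h_first : d₁ * (1 - e ^ 2) ≤ d₁ := by nlinarith [sq_nonneg e]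
  have h_factor : (1 + e) * (1 + e ^ 2 + d₁) ≤ 1 + 1 / 32 := calc
    (1 + e) * (1 + e ^ 2 + d₁) ≤ (65 / 64) * (1 + 2 / 4096) :=
      mul_le_mul (by linarith) (by linarith) (by positivity) (by norm_num)
    _ ≤ 1 + 1 / 32 := by norm_num
  have h_second : d₀ * ((1 + e) * (1 + e ^ 2 + d₁)) ≤ d₀ * (1 + 1 / 32) :=
    mul_le_mul_of_nonneg_left h_factor hd₀
  nlinarith [pow_nonneg (sq_nonneg e) 2]

theorem denominator_error_upper_bound_general
    (A B rec Q ε₀ d d₀ d₁ N₀ D₀ F₀ N₁ D₁ F₁ N₂ ε₀' : ℝ)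
    (hB : B ≠ 0) (hQ : Q = A / B) (hQpos : 0 < Q) (hQlt : Q < 2)
    (hε : ε₀ = 1 - B * rec)
    (hd' : d ≤ 2 ^ (-12 : ℤ))
    (hd₀ : 0 ≤ d₀) (hd₀' : d₀ < d)
    (hd₁ : 0 ≤ d₁) (hd₁' : d₁ < d)
    (hε₀' : ε₀' = ε₀ + d₀) (hε₀'_small : |ε₀'| ≤ 2 ^ (-6 : ℤ))
    (hN₀ : N₀ = A * rec) (hD₀ : D₀ = B * rec - d₀)
    (hF₀ : F₀ = 2 - D₀)
    (hN₁ : N₁ = N₀ * F₀) (hD₁ : D₁ = D₀ * F₀ - d₁)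
    (hF₁ : F₁ = 2 - D₁)
    (hN₂ : N₂ = N₁ * F₁) :
    N₂ - Q < (2 * Q + 1) * d := by
  have hBrec : B * rec = 1 - ε₀' + d₀ := by rw [hε₀', hε]; ring
  have hArec : A * rec = Q * (B * rec) := by rw [hQ, ← mul_assoc, div_mul_cancel₀ A hB]
  have hN₂_closed : N₂ = Q * (1 - ε₀' + d₀) * (1 + ε₀') * (1 + ε₀' ^ 2 + d₁) := by
    rw [hN₂, hN₁, hF₁, hD₁, hF₀, hD₀, hN₀, hArec, hBrec]; ring
  have he : |ε₀'| ≤ 1 / 64 := by norm_num at hε₀'_small ⊢; exact hε₀'_small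
  have hd : d ≤ 1 / 4096 := by norm_num at hd' ⊢; exact hd'
  rw [hN₂_closed, two_step_error_eq]
  calc _ < Q * ((2 + 1 / 32) * d) :=
        mul_lt_mul_of_pos_left (two_step_error_factor_lt he hd hd₀ hd₀' hd₁ hd₁') hQpos
    _ ≤ (2 * Q + 1) * d := by nlinarith

/-- Upper bound on the final error under denominator truncation errors only. -/
theorem denominator_error_upper_bound
    (A B rec Q ε₀ d d₀ d₁ N₀ D₀ F₀ N₁ D₁ F₁ N₂ ε₀' : ℝ)
    (hB : B ≠ 0) (hQ : Q = A / B) (hQpos : 0 < Q) (hQlt : Q < 2)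
    (hε : ε₀ = 1 - B * rec)
    (hd : 0 < d) (hd' : d ≤ 2 ^ (-12 : ℤ))
    (hd₀ : 0 ≤ d₀) (hd₀' : d₀ < d)
    (hd₁ : 0 ≤ d₁) (hd₁' : d₁ < d)
    (hε₀' : ε₀' = ε₀ + d₀) (hε₀'_small : |ε₀'| ≤ 2 ^ (-6 : ℤ))
    (hN₀ : N₀ = A * rec) (hD₀ : D₀ = B * rec - d₀)
    (hF₀ : F₀ = 2 - D₀)
    (hN₁ : N₁ = N₀ * F₀) (hD₁ : D₁ = D₀ * F₀ - d₁)
    (hF₁ : F₁ = 2 - D₁)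
    (hN₂ : N₂ = N₁ * F₁) :
    N₂ - Q < (2 * Q + 1) * d :=
  denominator_error_upper_bound_general A B rec Q ε₀ d d₀ d₁ N₀ D₀ F₀ N₁ D₁ F₁ N₂ ε₀' hB hQ hQpos
    hQlt hε hd' hd₀ hd₀' hd₁ hd₁' hε₀' hε₀'_small hN₀ hD₀ hF₀ hN₁ hD₁ hF₁ hN₂
end

section
/- Numerical bound on the accumulative error term after three iterations: let Q, ulp, F₀, F₁, F₂ and nᵢ (i = 0,…,3), dᵢ (i = 0,…,2) be real numbers with Q > 0, ulp > 0, 1 ≤ F₂ ≤ F₁ ≤ F₀ ≤ 1.0156, 0 ≤ nᵢ < ulp, and 0 ≤ dᵢ < ulp. Define AET(3) = F₀·F₁·F₂·(Q·d₀ - n₀) + F₁·F₂·(Q·d₁ - n₁) + F₂·(Q·d₂ - n₂) - n₃. Then -4.0947·ulp < AET(3) < 3.0947·Q·ulp. -/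
/-!
Each truncation pair contributes `w * (Q * d - n)` with weight `w` a product of iterative
factors. Since `0 ≤ d, n < ulp`, this lies strictly between `-w * ulp` and `w * Q * ulp`.
From `1 ≤ Fᵢ ≤ 1.0156` the weights are at most `1.0156`, `1.0156² ≤ 1.0315` and
`1.0156³ ≤ 1.0476`, which sum to `3.0947`; the lone `-n₃` accounts for the extra `ulp`
in the lower bound.
-/

section WeightedError

variable {w W Q d n u : ℝ}

theorem neg_mul_lt_weighted_error (hw : 0 < w) (hwW : w ≤ W) (hQ : 0 ≤ Q) (hd : 0 ≤ d)
    (hn : 0 ≤ n) (hnu : n < u) : -(W * u) < w * (Q * d - n) :=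
  calc -(W * u) ≤ -(w * u) := neg_le_neg (mul_le_mul_of_nonneg_right hwW (hn.trans hnu.le))
    _ < -(w * n) := neg_lt_neg (mul_lt_mul_of_pos_left hnu hw)
    _ ≤ w * (Q * d - n) := by nlinarith [mul_nonneg hw.le (mul_nonneg hQ hd)]

theorem weighted_error_lt_mul (hw : 0 < w) (hwW : w ≤ W) (hQ : 0 < Q) (hd : 0 ≤ d)
    (hdu : d < u) (hn : 0 ≤ n) : w * (Q * d - n) < W * Q * u :=
  calc w * (Q * d - n) ≤ w * (Q * d) := mul_le_mul_of_nonneg_left (by linarith) hw.le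
    _ < w * (Q * u) := mul_lt_mul_of_pos_left (mul_lt_mul_of_pos_left hdu hQ) hw
    _ ≤ W * (Q * u) := mul_le_mul_of_nonneg_right hwW (mul_nonneg hQ.le (hd.trans hdu.le))
    _ = W * Q * u := (mul_assoc W Q u).symm

theorem weighted_error_mem_Ioo (hw : 0 < w) (hwW : w ≤ W) (hQ : 0 < Q) (hd : 0 ≤ d)
    (hdu : d < u) (hn : 0 ≤ n) (hnu : n < u) :
    w * (Q * d - n) ∈ Set.Ioo (-(W * u)) (W * Q * u) :=
  ⟨neg_mul_lt_weighted_error hw hwW hQ.le hd hn hnu, weighted_error_lt_mul hw hwW hQ hd hdu hn⟩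

end WeightedError

theorem aet3_numerical_bound_general
    (Q ulp F₀ F₁ F₂ n₀ n₁ n₂ n₃ d₀ d₁ d₂ : ℝ)
    (hQ : 0 < Q)
    (hF₂ : 1 ≤ F₂) (hF₂₁ : F₂ ≤ F₁) (hF₁₀ : F₁ ≤ F₀) (hF₀ : F₀ ≤ 1.0156)
    (hn₀ : 0 ≤ n₀) (hn₀' : n₀ < ulp)
    (hn₁ : 0 ≤ n₁) (hn₁' : n₁ < ulp)
    (hn₂ : 0 ≤ n₂) (hn₂' : n₂ < ulp)
    (hn₃ : 0 ≤ n₃) (hn₃' : n₃ < ulp)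
    (hd₀ : 0 ≤ d₀) (hd₀' : d₀ < ulp)
    (hd₁ : 0 ≤ d₁) (hd₁' : d₁ < ulp)
    (hd₂ : 0 ≤ d₂) (hd₂' : d₂ < ulp) :
    -4.0947 * ulp
        < F₀ * F₁ * F₂ * (Q * d₀ - n₀) + F₁ * F₂ * (Q * d₁ - n₁)
            + F₂ * (Q * d₂ - n₂) - n₃ ∧
      F₀ * F₁ * F₂ * (Q * d₀ - n₀) + F₁ * F₂ * (Q * d₁ - n₁)
            + F₂ * (Q * d₂ - n₂) - n₃
        < 3.0947 * Q * ulp := by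
  have hF₂pos : 0 < F₂ := one_pos.trans_le hF₂
  have hF₁pos : 0 < F₁ := hF₂pos.trans_le hF₂₁
  have hF₀pos : 0 < F₀ := hF₁pos.trans_le hF₁₀
  have hF₁u : F₁ ≤ 1.0156 := hF₁₀.trans hF₀
  have hF₂u : F₂ ≤ 1.0156 := hF₂₁.trans hF₁u
  have hw₁ : F₁ * F₂ ≤ 1.0315 :=
    (mul_le_mul hF₁u hF₂u hF₂pos.le (by norm_num)).trans (by norm_num)
  have hw₀ : F₀ * F₁ * F₂ ≤ 1.0476 := by
    rw [mul_assoc]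
    exact (mul_le_mul hF₀ hw₁ (by positivity) (by norm_num)).trans (by norm_num)
  obtain ⟨hlo₀, hhi₀⟩ := weighted_error_mem_Ioo (by positivity) hw₀ hQ hd₀ hd₀' hn₀ hn₀'
  obtain ⟨hlo₁, hhi₁⟩ := weighted_error_mem_Ioo (by positivity) hw₁ hQ hd₁ hd₁' hn₁ hn₁'
  obtain ⟨hlo₂, hhi₂⟩ := weighted_error_mem_Ioo hF₂pos hF₂u hQ hd₂ hd₂' hn₂ hn₂'
  constructor <;> linarith

/-- Numerical bound on the accumulative error term after three iterations. -/
theorem aet3_numerical_bound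
    (Q ulp F₀ F₁ F₂ n₀ n₁ n₂ n₃ d₀ d₁ d₂ : ℝ)
    (hQ : 0 < Q) (hulp : 0 < ulp)
    (hF₂ : 1 ≤ F₂) (hF₂₁ : F₂ ≤ F₁) (hF₁₀ : F₁ ≤ F₀) (hF₀ : F₀ ≤ 1.0156)
    (hn₀ : 0 ≤ n₀) (hn₀' : n₀ < ulp)
    (hn₁ : 0 ≤ n₁) (hn₁' : n₁ < ulp)
    (hn₂ : 0 ≤ n₂) (hn₂' : n₂ < ulp)
    (hn₃ : 0 ≤ n₃) (hn₃' : n₃ < ulp)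
    (hd₀ : 0 ≤ d₀) (hd₀' : d₀ < ulp)
    (hd₁ : 0 ≤ d₁) (hd₁' : d₁ < ulp)
    (hd₂ : 0 ≤ d₂) (hd₂' : d₂ < ulp) :
    -4.0947 * ulp
        < F₀ * F₁ * F₂ * (Q * d₀ - n₀) + F₁ * F₂ * (Q * d₁ - n₁)
            + F₂ * (Q * d₂ - n₂) - n₃ ∧
      F₀ * F₁ * F₂ * (Q * d₀ - n₀) + F₁ * F₂ * (Q * d₁ - n₁)
            + F₂ * (Q * d₂ - n₂) - n₃
        < 3.0947 * Q * ulp :=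
  aet3_numerical_bound_general Q ulp F₀ F₁ F₂ n₀ n₁ n₂ n₃ d₀ d₁ d₂ hQ hF₂ hF₂₁ hF₁₀ hF₀ hn₀ hn₀' hn₁
    hn₁' hn₂ hn₂' hn₃ hn₃' hd₀ hd₀' hd₁ hd₁' hd₂ hd₂'
end

section
/- Precise form of Lemma 3.1/3.2 (iterative factors have negligible multiplicative effect): let ε₀ be a real number with |ε₀| ≤ 2⁻⁶. Then for all natural numbers i ≤ m, the product of iterative factors satisfies ∏_{j=i}^{m} (1 + ε₀^(2^j)) ≤ 1 + 2⁻⁵. -/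
/-!
Since `(1 - x^(2^j)) (1 + x^(2^j)) = 1 - x^(2^(j+1))`, the product of the factors `1 + x^(2^j)`
over `i ≤ j ≤ m` telescopes to `(1 - x^(2^(m+1))) / (1 - x^(2^i))`. For `0 ≤ x < 1` this is at most
`1 / (1 - x)`, and replacing `ε₀` by `|ε₀|` only enlarges each factor, so the product is at most
`1 / (1 - 2⁻⁶) = 64/63 < 33/32`.
-/

open Finset

section Telescoping

variable {R : Type*} [CommRing R]

theorem one_sub_pow_two_pow_mul_prod_Ico (x : R) {i n : ℕ} (hin : i ≤ n) :
    (1 - x ^ 2 ^ i) * ∏ j ∈ Ico i n, (1 + x ^ 2 ^ j) = 1 - x ^ 2 ^ n := by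
  induction n, hin using Nat.le_induction with
  | base => simp
  | succ n hin ih =>
    rw [prod_Ico_succ_top hin, ← mul_assoc, ih, pow_succ, pow_mul]
    ring

theorem one_sub_pow_two_pow_mul_prod_Icc (x : R) {i m : ℕ} (him : i ≤ m + 1) :
    (1 - x ^ 2 ^ i) * ∏ j ∈ Icc i m, (1 + x ^ 2 ^ j) = 1 - x ^ 2 ^ (m + 1) := by
  rw [← Ico_add_one_right_eq_Icc, one_sub_pow_two_pow_mul_prod_Ico x him]

end Telescoping

section Bounds

variable {K : Type*} [Field K] [LinearOrder K] [IsStrictOrderedRing K]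

theorem prod_Icc_one_add_pow_two_pow_le_inv_one_sub {x : K} (hx₀ : 0 ≤ x) (hx₁ : x < 1)
    (i m : ℕ) : ∏ j ∈ Icc i m, (1 + x ^ 2 ^ j) ≤ (1 - x)⁻¹ := by
  rcases Nat.lt_or_ge (m + 1) i with hmi | him
  · rw [Icc_eq_empty (by omega), prod_empty]
    exact one_le_inv₀ (by linarith) |>.mpr (by linarith)
  have hxi : x ^ 2 ^ i ≤ x := pow_le_of_le_one hx₀ hx₁.le (by positivity)
  have hpos : 0 < 1 - x ^ 2 ^ i := by linarith
  calc ∏ j ∈ Icc i m, (1 + x ^ 2 ^ j)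
      = (1 - x ^ 2 ^ (m + 1)) / (1 - x ^ 2 ^ i) := by
        rw [eq_div_iff hpos.ne', mul_comm, one_sub_pow_two_pow_mul_prod_Icc x him]
    _ ≤ 1 / (1 - x ^ 2 ^ i) := by
        gcongr
        linarith [pow_nonneg hx₀ (2 ^ (m + 1))]
    _ ≤ (1 - x)⁻¹ := by
        rw [one_div]
        gcongr

theorem prod_one_add_pow_le_prod_one_add_abs_pow {ε : K} (hε : |ε| ≤ 1) (s : Finset ℕ)
    (e : ℕ → ℕ) : ∏ j ∈ s, (1 + ε ^ e j) ≤ ∏ j ∈ s, (1 + |ε| ^ e j) := by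
  refine prod_le_prod (fun j _ ↦ ?_) (fun j _ ↦ ?_)
  · have : |ε ^ e j| ≤ 1 := by
      rw [abs_pow]
      exact pow_le_one₀ (abs_nonneg ε) hε
    linarith [neg_abs_le (ε ^ e j)]
  · rw [← abs_pow]
    linarith [le_abs_self (ε ^ e j)]

end Bounds

/-- Precise form of Lemma 3.1/3.2: products of exact iterative factors are at
most `1 + 2⁻⁵` when the initial relative error is at most `2⁻⁶`. -/
theorem product_of_iterative_factors_bound
    (ε₀ : ℝ) (hε : |ε₀| ≤ 2 ^ (-6 : ℤ)) :
    ∀ i m : ℕ, i ≤ m →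
      ∏ j ∈ Finset.Icc i m, (1 + ε₀ ^ (2 ^ j)) ≤ 1 + 2 ^ (-5 : ℤ) := by
  intro i m _
  have hε' : |ε₀| ≤ 1 / 64 := by norm_num at hε ⊢; exact hε
  calc ∏ j ∈ Icc i m, (1 + ε₀ ^ 2 ^ j)
      ≤ ∏ j ∈ Icc i m, (1 + |ε₀| ^ 2 ^ j) :=
        prod_one_add_pow_le_prod_one_add_abs_pow (by linarith) _ _
    _ ≤ (1 - |ε₀|)⁻¹ :=
        prod_Icc_one_add_pow_two_pow_le_inv_one_sub (abs_nonneg ε₀) (by linarith) i m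
    _ ≤ (1 - 1 / 64)⁻¹ := by gcongr
    _ ≤ 1 + 2 ^ (-5 : ℤ) := by norm_num
end
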